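/- Let D ≥ 1, let μ be the rotation-invariant (uniform) probability measure on the unit sphere S = {u ∈ ℂ^D : ‖u‖ = 1}, let ρ be a density matrix on ℂ^D, and let ν_ρ be the Born probability measure on S, i.e. the measure with density u ↦ D·⟨u, ρ u⟩ with respect to μ. Then for every Hermitian D×D matrix O, ∫_S ((D+1)·⟨u, O u⟩ − tr(O)) dν_ρ(u) = tr(O ρ). -/

import Mathlib

/-
Write `D` for the dimension. Unitary invariance of `μ` pins down its second and fourth moments.
Coordinate phases kill every monomial `ū_i u_j` and `ū_i u_j ū_k u_l` whose indices do not pair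
up, and transitivity of the unitary group on the sphere makes `∫ g ⟨w, u⟩ dμ(u)` independent of
the unit vector `w`. Together with `∑ |u_k|² = 1` this gives `D ∫ ū_i u_j = δ_ij` and
`D (D + 1) ∫ ū_i u_j ū_k u_l = δ_ij δ_kl + δ_il δ_kj`, i.e.
`D ∫ ⟨u, A u⟩ = tr A` and `D (D + 1) ∫ ⟨u, A u⟩ ⟨u, B u⟩ = tr A tr B + tr (A B)`.
Integrating against the Born density `D ⟨u, ρ u⟩`, the two `tr ρ tr O` terms cancel and
`tr (ρ O)` remains.
-/

open MeasureTheory Matrix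
open scoped ComplexOrder

noncomputable instance (D : ℕ) : MeasurableSpace (EuclideanSpace ℂ (Fin D)) := WithLp.measurableSpace _ _
instance (D : ℕ) : BorelSpace (EuclideanSpace ℂ (Fin D)) := PiLp.borelSpace _

/-- The quadratic form `⟨u, A u⟩` of a matrix `A` at a vector `u ∈ ℂ^D`,
with respect to the standard inner product on `ℂ^D`. -/
noncomputable def expval {D : ℕ} (A : Matrix (Fin D) (Fin D) ℂ)
    (u : EuclideanSpace ℂ (Fin D)) : ℂ :=
  inner ℂ u ((Matrix.toEuclideanLin A) u)

open ComplexConjugate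

theorem Complex.I_mem_unitary : Complex.I ∈ unitary ℂ := by
  simp [Unitary.mem_iff]

theorem Complex.sum_norm_add_I_pow_mul_pow_four (x y : ℂ) :
    ∑ n : Fin 4, ‖x + I ^ (n : ℕ) * y‖ ^ 4
      = 4 * (‖x‖ ^ 4 + ‖y‖ ^ 4 + 4 * (‖x‖ ^ 2 * ‖y‖ ^ 2)) := by
  simp only [Fin.sum_univ_four, show ∀ z : ℂ, ‖z‖ ^ 4 = (‖z‖ ^ 2) ^ 2 from fun z => by ring,
    Complex.sq_norm, Complex.normSq_apply]
  simp only [Fin.coe_ofNat_eq_mod, Nat.zero_mod, Nat.one_mod, Nat.reduceMod, Nat.mod_succ,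
    pow_zero, pow_succ, one_mul, I_mul_I, neg_mul, add_re, add_im, mul_re, mul_im, neg_re, neg_im,
    I_re, I_im, zero_mul, zero_sub, zero_add, neg_neg]
  ring

namespace EuclideanSpace

variable {ι : Type*} [Fintype ι] [DecidableEq ι]

theorem exists_linearIsometryEquiv_single_eq (i : ι) {w : EuclideanSpace ℂ ι} (hw : ‖w‖ = 1) :
    ∃ U : EuclideanSpace ℂ ι ≃ₗᵢ[ℂ] EuclideanSpace ℂ ι, U (single i 1) = w := by
  have hv : Orthonormal ℂ (({i} : Set ι).domRestrict fun _ => w) := by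
    rw [orthonormal_iff_ite]
    rintro ⟨a, rfl⟩ ⟨b, rfl⟩
    simp [inner_self_eq_norm_sq_to_K, hw]
  obtain ⟨b, hb⟩ := hv.exists_orthonormalBasis_extension_of_card_eq (by simp)
  exact ⟨b.repr.symm, by simpa using hb i rfl⟩

theorem norm_single_add_single_sq {i k : ι} (hik : i ≠ k) (a b : ℂ) :
    ‖single i a + single k b‖ ^ 2 = ‖a‖ ^ 2 + ‖b‖ ^ 2 := by
  have h : inner ℂ (single i a) (single k b) = 0 := by
    rw [inner_single_left]
    simp [hik]
  rw [sq, norm_add_sq_eq_norm_sq_add_norm_sq_of_inner_eq_zero _ _ h]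
  simp [sq]

noncomputable def coordPhase (p : ι) (t : unitary ℂ) :
    EuclideanSpace ℂ ι ≃ₗᵢ[ℂ] EuclideanSpace ℂ ι :=
  LinearIsometryEquiv.piLpCongrRight 2 fun q =>
    Unitary.mulLeft ℂ ℂ ((Pi.mulSingle p t : ι → unitary ℂ) q)

theorem coordPhase_apply (p : ι) (t : unitary ℂ) (u : EuclideanSpace ℂ ι) (q : ι) :
    coordPhase p t u q = (if q = p then (t : ℂ) else 1) * u q := by
  by_cases h : q = p <;> simp [coordPhase, h]

end EuclideanSpace

section UnitarilyInvariant

variable {ι : Type*} [Fintype ι] [MeasurableSpace (EuclideanSpace ℂ ι)]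
  [BorelSpace (EuclideanSpace ℂ ι)] {μ : Measure (EuclideanSpace ℂ ι)}

theorem integrable_of_continuous_of_ae_norm_eq_one [IsFiniteMeasure μ]
    (hsupp : ∀ᵐ u ∂μ, ‖u‖ = 1) {F : Type*} [NormedAddCommGroup F]
    {f : EuclideanSpace ℂ ι → F} (hf : Continuous f) : Integrable f μ := by
  obtain ⟨C, hC⟩ := (isCompact_sphere (0 : EuclideanSpace ℂ ι) 1).exists_bound_of_continuousOn
    hf.continuousOn
  refine Integrable.mono' (integrable_const C) hf.aestronglyMeasurable ?_
  filter_upwards [hsupp] with u hu using hC u (by simpa using hu)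

variable (hinv : ∀ U : EuclideanSpace ℂ ι ≃ₗᵢ[ℂ] EuclideanSpace ℂ ι, μ.map U = μ)
include hinv

theorem integral_comp_linearIsometryEquiv {F : Type*} [NormedAddCommGroup F] [NormedSpace ℝ F]
    (U : EuclideanSpace ℂ ι ≃ₗᵢ[ℂ] EuclideanSpace ℂ ι) (g : EuclideanSpace ℂ ι → F) :
    ∫ u, g (U u) ∂μ = ∫ u, g u ∂μ :=
  MeasurePreserving.integral_comp' (f := U.toHomeomorph.toMeasurableEquiv)
    ⟨U.continuous.measurable, hinv U⟩ g

theorem integral_eq_zero_of_comp_eq_mul (U : EuclideanSpace ℂ ι ≃ₗᵢ[ℂ] EuclideanSpace ℂ ι)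
    {f : EuclideanSpace ℂ ι → ℂ} {c : ℂ} (hc : c ≠ 1) (hf : ∀ u, f (U u) = c * f u) :
    ∫ u, f u ∂μ = 0 := by
  have h : ∫ u, f u ∂μ = c * ∫ u, f u ∂μ := by
    rw [← integral_const_mul, ← integral_comp_linearIsometryEquiv hinv U]
    simp only [hf]
  have : (1 - c) * ∫ u, f u ∂μ = 0 := by linear_combination h
  exact (mul_eq_zero.1 this).resolve_left (sub_ne_zero.2 hc.symm)

variable [DecidableEq ι]

theorem integral_comp_inner_of_norm_eq_one {F : Type*} [NormedAddCommGroup F] [NormedSpace ℝ F]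
    (g : ℂ → F) {w : EuclideanSpace ℂ ι} (hw : ‖w‖ = 1) (i : ι) :
    ∫ u, g (inner ℂ w u) ∂μ = ∫ u, g (u i) ∂μ := by
  obtain ⟨U, rfl⟩ := EuclideanSpace.exists_linearIsometryEquiv_single_eq i hw
  simpa [U.inner_map_eq_flip, EuclideanSpace.inner_single_left] using
    integral_comp_linearIsometryEquiv hinv U.symm fun u => g (u i)

theorem integral_comp_apply_eq {F : Type*} [NormedAddCommGroup F] [NormedSpace ℝ F]
    (g : ℂ → F) (i j : ι) : ∫ u, g (u i) ∂μ = ∫ u, g (u j) ∂μ := by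
  simpa [EuclideanSpace.inner_single_left] using
    integral_comp_inner_of_norm_eq_one hinv g (w := EuclideanSpace.single i 1) (by simp) j

theorem integral_conj_mul_apply_eq_zero {i j : ι} (hij : i ≠ j) :
    ∫ u, conj (u i) * u j ∂μ = 0 := by
  refine integral_eq_zero_of_comp_eq_mul hinv
    (EuclideanSpace.coordPhase j ⟨_, Complex.I_mem_unitary⟩) (c := Complex.I)
    (by simp [Complex.ext_iff]) fun u => ?_
  simp only [EuclideanSpace.coordPhase_apply, hij, if_true, if_false, one_mul]
  ring

theorem integral_conj_mul_conj_mul_eq_zero {i j k l : ι} (h₁ : ¬(i = j ∧ k = l))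
    (h₂ : ¬(i = l ∧ k = j)) : ∫ u, conj (u i) * u j * (conj (u k) * u l) ∂μ = 0 := by
  let χ (p q : ι) : ℂ := if q = p then Complex.I else 1
  suffices ∃ p, conj (χ p i) * χ p j * (conj (χ p k) * χ p l) ≠ 1 by
    obtain ⟨p, hp⟩ := this
    refine integral_eq_zero_of_comp_eq_mul hinv
      (EuclideanSpace.coordPhase p ⟨_, Complex.I_mem_unitary⟩) hp fun u => ?_
    simp only [EuclideanSpace.coordPhase_apply, map_mul]
    ring
  by_cases hij : i = j
  · refine ⟨l, ?_⟩
    have hkl : k ≠ l := fun h => h₁ ⟨hij, h⟩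
    subst hij
    by_cases hil : i = l <;> simp [χ, hkl, hil, Complex.ext_iff]
  by_cases hil : i = l
  · refine ⟨j, ?_⟩
    have hkj : k ≠ j := fun h => h₂ ⟨hil, h⟩
    subst hil
    simp [χ, hkj, hij, Complex.ext_iff]
  · refine ⟨i, ?_⟩
    by_cases hki : k = i <;> norm_num [χ, hki, Ne.symm hij, Ne.symm hil, Complex.ext_iff]

theorem integral_norm_add_mul_pow_four {i k : ι} (hik : i ≠ k) {s : ℂ} (hs : ‖s‖ = 1) :
    ∫ u, ‖u i + s * u k‖ ^ 4 ∂μ = 4 * ∫ u, ‖u i‖ ^ 4 ∂μ := by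
  set w : EuclideanSpace ℂ ι :=
    (Real.sqrt 2 : ℂ)⁻¹ • (EuclideanSpace.single i 1 + EuclideanSpace.single k (conj s))
  have hw : ‖w‖ = 1 := by
    have h := EuclideanSpace.norm_single_add_single_sq hik 1 (conj s)
    rw [norm_one, Complex.norm_conj, hs] at h
    have hv : ‖EuclideanSpace.single i 1 + EuclideanSpace.single k (conj s)‖ = Real.sqrt 2 := by
      rw [← Real.sqrt_sq (norm_nonneg _), h]
      norm_num
    rw [norm_smul, hv, norm_inv, Complex.norm_real, Real.norm_of_nonneg (Real.sqrt_nonneg _)]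
    exact inv_mul_cancel₀ (by positivity)
  have hinner (u : EuclideanSpace ℂ ι) : ‖inner ℂ w u‖ ^ 4 = ‖u i + s * u k‖ ^ 4 / 4 := by
    have h4 : Real.sqrt 2 ^ 4 = 4 := by
      rw [show 4 = 2 * 2 from rfl, pow_mul, Real.sq_sqrt zero_le_two]
      norm_num
    rw [inner_smul_left, inner_add_left, EuclideanSpace.inner_single_left,
      EuclideanSpace.inner_single_left, map_one, one_mul, Complex.conj_conj, norm_mul, mul_pow,
      Complex.norm_conj, norm_inv, Complex.norm_real, Real.norm_of_nonneg (Real.sqrt_nonneg _),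
      inv_pow, h4]
    ring
  have h := integral_comp_inner_of_norm_eq_one hinv (fun z => ‖z‖ ^ 4) hw i
  simp only [hinner, integral_div] at h
  linarith

/-- Averaging `integral_norm_add_mul_pow_four` over `s = 1, I, -1, -I` cancels the cross
terms in `ū_i u_k`. -/
theorem integral_norm_pow_four_apply [IsFiniteMeasure μ] (hsupp : ∀ᵐ u ∂μ, ‖u‖ = 1)
    {i k : ι} (hik : i ≠ k) :
    ∫ u, ‖u i‖ ^ 4 ∂μ = 2 * ∫ u, ‖u i‖ ^ 2 * ‖u k‖ ^ 2 ∂μ := by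
  have hint {f : EuclideanSpace ℂ ι → ℝ} (hf : Continuous f) : Integrable f μ :=
    integrable_of_continuous_of_ae_norm_eq_one hsupp hf
  have hsum := congrArg (fun f => ∫ u, f u ∂μ)
    (funext fun u : EuclideanSpace ℂ ι => Complex.sum_norm_add_I_pow_mul_pow_four (u i) (u k))
  simp only at hsum
  rw [integral_finsetSum _ fun n _ => hint (by fun_prop)] at hsum
  simp only [integral_norm_add_mul_pow_four hinv hik (s := Complex.I ^ _) (by simp),
    Finset.sum_const, Finset.card_univ, Fintype.card_fin, nsmul_eq_mul] at hsum
  rw [integral_const_mul, integral_add (hint (by fun_prop)) (hint (by fun_prop)),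
    integral_add (hint (by fun_prop)) (hint (by fun_prop)), integral_const_mul,
    integral_comp_apply_eq hinv (fun z => ‖z‖ ^ 4) k i] at hsum
  push_cast at hsum
  linarith

variable [IsProbabilityMeasure μ] (hsupp : ∀ᵐ u ∂μ, ‖u‖ = 1)
include hsupp

theorem card_mul_integral_norm_sq_apply (i : ι) :
    (Fintype.card ι : ℝ) * ∫ u, ‖u i‖ ^ 2 ∂μ = 1 := by
  calc (Fintype.card ι : ℝ) * ∫ u, ‖u i‖ ^ 2 ∂μ = ∑ j, ∫ u, ‖u j‖ ^ 2 ∂μ := by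
        simp [integral_comp_apply_eq hinv (fun z => ‖z‖ ^ 2) _ i]
    _ = ∫ u, ∑ j, ‖u j‖ ^ 2 ∂μ :=
        (integral_finsetSum _ fun j _ =>
          integrable_of_continuous_of_ae_norm_eq_one hsupp (by fun_prop)).symm
    _ = ∫ _, 1 ∂μ := integral_congr_ae <| hsupp.mono fun u hu => by
        simp [← EuclideanSpace.norm_sq_eq, hu]
    _ = 1 := by simp

theorem card_mul_card_add_one_mul_integral_norm_sq_mul_norm_sq (i k : ι) :
    (Fintype.card ι : ℝ) * (Fintype.card ι + 1) * ∫ u, ‖u i‖ ^ 2 * ‖u k‖ ^ 2 ∂μ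
      = if i = k then 2 else 1 := by
  set M := ∫ u, ‖u i‖ ^ 4 ∂μ
  have hterm (k : ι) :
      ∫ u, ‖u i‖ ^ 2 * ‖u k‖ ^ 2 ∂μ = M / 2 + if k = i then M / 2 else 0 := by
    rcases eq_or_ne k i with rfl | hki
    · rw [if_pos rfl, add_halves]
      exact integral_congr_ae (ae_of_all _ fun u => by ring)
    · simp [if_neg hki, M, integral_norm_pow_four_apply hinv hsupp (Ne.symm hki)]
  have hrow : ∑ k, ∫ u, ‖u i‖ ^ 2 * ‖u k‖ ^ 2 ∂μ = ∫ u, ‖u i‖ ^ 2 ∂μ := by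
    rw [← integral_finsetSum _ fun k _ =>
      integrable_of_continuous_of_ae_norm_eq_one hsupp (by fun_prop)]
    refine integral_congr_ae <| hsupp.mono fun u hu => ?_
    simp [← Finset.mul_sum, ← EuclideanSpace.norm_sq_eq, hu]
  have hM : (Fintype.card ι : ℝ) * (Fintype.card ι + 1) * M = 2 := by
    have h2 := card_mul_integral_norm_sq_apply hinv hsupp i
    simp only [hterm, Finset.sum_add_distrib, Finset.sum_ite_eq', Finset.mem_univ, if_true,
      Finset.sum_const, Finset.card_univ, nsmul_eq_mul] at hrow
    rw [← hrow] at h2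
    linear_combination 2 * h2
  rw [hterm]
  split_ifs with h₁ h₂ h₂
  · linear_combination hM
  · exact absurd h₁.symm h₂
  · exact absurd h₂.symm h₁
  · linear_combination hM / 2

theorem card_mul_integral_conj_mul_apply (i j : ι) :
    (Fintype.card ι : ℂ) * ∫ u, conj (u i) * u j ∂μ = if i = j then 1 else 0 := by
  rcases eq_or_ne i j with rfl | hij
  · simp only [← Complex.normSq_eq_conj_mul_self, Complex.normSq_eq_norm_sq, if_true]
    exact_mod_cast card_mul_integral_norm_sq_apply hinv hsupp i
  · rw [integral_conj_mul_apply_eq_zero hinv hij, if_neg hij, mul_zero]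

theorem card_mul_card_add_one_mul_integral_conj_mul_conj_mul (i j k l : ι) :
    (Fintype.card ι : ℂ) * (Fintype.card ι + 1) *
        ∫ u, conj (u i) * u j * (conj (u k) * u l) ∂μ
      = (if i = j then 1 else 0) * (if k = l then 1 else 0)
        + (if i = l then 1 else 0) * (if k = j then 1 else 0) := by
  have hdiag (i k : ι) : (Fintype.card ι : ℂ) * (Fintype.card ι + 1) *
      ∫ u, conj (u i) * u i * (conj (u k) * u k) ∂μ = if i = k then 2 else 1 := by
    simp only [← Complex.normSq_eq_conj_mul_self, ← Complex.ofReal_mul, Complex.normSq_eq_norm_sq]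
    have h := card_mul_card_add_one_mul_integral_norm_sq_mul_norm_sq hinv hsupp i k
    split_ifs at h ⊢ <;> exact_mod_cast h
  by_cases h₁ : i = j ∧ k = l
  · obtain ⟨rfl, rfl⟩ := h₁
    rw [hdiag]
    rcases eq_or_ne i k with rfl | hik
    · norm_num
    · simp [hik, hik.symm]
  by_cases h₂ : i = l ∧ k = j
  · obtain ⟨rfl, rfl⟩ := h₂
    have hik : i ≠ k := fun h => h₁ ⟨h, h.symm⟩
    have hswap (u : EuclideanSpace ℂ ι) :
        conj (u i) * u k * (conj (u k) * u i) = conj (u i) * u i * (conj (u k) * u k) := by ring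
    simp only [hswap, hdiag, if_neg hik, if_neg hik.symm]
    simp
  · rw [integral_conj_mul_conj_mul_eq_zero hinv h₁ h₂, mul_zero]
    split_ifs <;> simp_all

end UnitarilyInvariant

section Expval

variable {D : ℕ}

theorem expval_eq_sum (A : Matrix (Fin D) (Fin D) ℂ) (u : EuclideanSpace ℂ (Fin D)) :
    expval A u = ∑ i, ∑ j, A i j * (conj (u i) * u j) := by
  simp only [expval, EuclideanSpace.inner_eq_star_dotProduct, Matrix.toLpLin_apply, dotProduct,
    Matrix.mulVec, Finset.sum_mul, Pi.star_apply, RCLike.star_def]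
  exact Finset.sum_congr rfl fun i _ => Finset.sum_congr rfl fun j _ => by ring

@[fun_prop]
theorem continuous_expval (A : Matrix (Fin D) (Fin D) ℂ) : Continuous (expval A) := by
  unfold expval
  fun_prop

theorem Matrix.PosSemidef.expval_nonneg {ρ : Matrix (Fin D) (Fin D) ℂ} (hρ : ρ.PosSemidef)
    (u : EuclideanSpace ℂ (Fin D)) : 0 ≤ expval ρ u := by
  simpa [expval, EuclideanSpace.inner_eq_star_dotProduct, Matrix.toLpLin_apply, dotProduct_comm]
    using hρ.dotProduct_mulVec_nonneg u.ofLp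

theorem integral_withDensity_expval (μ : Measure (EuclideanSpace ℂ (Fin D)))
    {ρ : Matrix (Fin D) (Fin D) ℂ} (hρ : ρ.PosSemidef) (g : EuclideanSpace ℂ (Fin D) → ℂ) :
    ∫ u, g u ∂μ.withDensity (fun u => ENNReal.ofReal ((D : ℝ) * (expval ρ u).re))
      = ∫ u, D * expval ρ u * g u ∂μ := by
  rw [integral_withDensity_eq_integral_toReal_smul (by fun_prop)
    (ae_of_all _ fun _ => ENNReal.ofReal_lt_top)]
  refine integral_congr_ae (ae_of_all _ fun u => ?_)
  dsimp only
  obtain ⟨hre, him⟩ := Complex.nonneg_iff.1 (hρ.expval_nonneg u)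
  rw [ENNReal.toReal_ofReal (by positivity), Complex.real_smul]
  congr 1
  push_cast
  rw [← Complex.re_add_im (expval ρ u), ← him]
  simp

variable {μ : Measure (EuclideanSpace ℂ (Fin D))} [IsProbabilityMeasure μ]
  (hsupp : ∀ᵐ u ∂μ, ‖u‖ = 1)
  (hinv : ∀ U : EuclideanSpace ℂ (Fin D) ≃ₗᵢ[ℂ] EuclideanSpace ℂ (Fin D), μ.map U = μ)
include hsupp hinv

theorem card_mul_integral_expval (A : Matrix (Fin D) (Fin D) ℂ) :
    (D : ℂ) * ∫ u, expval A u ∂μ = A.trace := by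
  have h2 := card_mul_integral_conj_mul_apply hinv hsupp (ι := Fin D)
  simp only [Fintype.card_fin] at h2
  simp (disch := exact fun _ _ => integrable_of_continuous_of_ae_norm_eq_one hsupp (by fun_prop))
    only [expval_eq_sum, integral_finsetSum, integral_const_mul, Finset.mul_sum,
      mul_left_comm (D : ℂ), h2]
  simp [Matrix.trace]

theorem card_mul_card_add_one_mul_integral_expval_mul_expval (A B : Matrix (Fin D) (Fin D) ℂ) :
    (D : ℂ) * (D + 1) * ∫ u, expval A u * expval B u ∂μ = A.trace * B.trace + (A * B).trace := by
  have h4 := card_mul_card_add_one_mul_integral_conj_mul_conj_mul hinv hsupp (ι := Fin D)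
  simp only [Fintype.card_fin] at h4
  simp only [expval_eq_sum, Finset.sum_mul_sum, mul_mul_mul_comm (A _ _)]
  simp (disch := exact fun _ _ => integrable_of_continuous_of_ae_norm_eq_one hsupp (by fun_prop))
    only [integral_finsetSum, integral_const_mul, Finset.mul_sum,
      mul_left_comm ((D : ℂ) * (D + 1)), h4]
  simp [Matrix.trace, Matrix.mul_apply, mul_add, Finset.sum_add_distrib, Finset.sum_mul_sum]

end Expval

theorem shadow_estimator_unbiased_general (D : ℕ)
    (μ : Measure (EuclideanSpace ℂ (Fin D))) [IsProbabilityMeasure μ]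
    (hsupp : ∀ᵐ u ∂μ, ‖u‖ = 1)
    (hinv : ∀ U : EuclideanSpace ℂ (Fin D) ≃ₗᵢ[ℂ] EuclideanSpace ℂ (Fin D),
      μ.map U = μ)
    (ρ : Matrix (Fin D) (Fin D) ℂ) (hρ : ρ.PosSemidef)
    (ν : Measure (EuclideanSpace ℂ (Fin D)))
    (hν : ν = μ.withDensity fun u => ENNReal.ofReal ((D : ℝ) * (expval ρ u).re))
    (O : Matrix (Fin D) (Fin D) ℂ) :
    ∫ u, (((D : ℂ) + 1) * expval O u - O.trace) ∂ν = (O * ρ).trace := by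
  have hint {f : EuclideanSpace ℂ (Fin D) → ℂ} (hf : Continuous f) : Integrable f μ :=
    integrable_of_continuous_of_ae_norm_eq_one hsupp hf
  rw [hν, integral_withDensity_expval μ hρ]
  calc ∫ u, D * expval ρ u * ((D + 1) * expval O u - O.trace) ∂μ
      = D * (D + 1) * ∫ u, expval ρ u * expval O u ∂μ
          - O.trace * (D * ∫ u, expval ρ u ∂μ) := by
        rw [← integral_const_mul, ← integral_const_mul, ← integral_const_mul,
          ← integral_sub (hint (by fun_prop)) (hint (by fun_prop))]
        exact integral_congr_ae (ae_of_all _ fun u => by ring)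
    _ = (O * ρ).trace := by
        rw [card_mul_card_add_one_mul_integral_expval_mul_expval hsupp hinv,
          card_mul_integral_expval hsupp hinv, trace_mul_comm]
        ring

/-- unbiasedness of the classical-shadow estimator, Lemma 1 of the paper:
let `μ` be the rotation-invariant probability measure on the unit sphere of `ℂ^D`,
`ρ` a density matrix, and `ν` the Born measure with density `u ↦ D·⟨u, ρ u⟩` w.r.t. `μ`.
Then for every Hermitian `O`, `∫ ((D+1)·⟨u,Ou⟩ − tr O) dν(u) = tr (O ρ)`. -/
theorem shadow_estimator_unbiased (D : ℕ) (hD : 1 ≤ D)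
    (μ : Measure (EuclideanSpace ℂ (Fin D))) [IsProbabilityMeasure μ]
    (hsupp : ∀ᵐ u ∂μ, ‖u‖ = 1)
    (hinv : ∀ U : EuclideanSpace ℂ (Fin D) ≃ₗᵢ[ℂ] EuclideanSpace ℂ (Fin D),
      μ.map U = μ)
    (ρ : Matrix (Fin D) (Fin D) ℂ) (hρ : ρ.PosSemidef) (hρtr : ρ.trace = 1)
    (ν : Measure (EuclideanSpace ℂ (Fin D))) [IsProbabilityMeasure ν]
    (hν : ν = μ.withDensity fun u => ENNReal.ofReal ((D : ℝ) * (expval ρ u).re))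
    (O : Matrix (Fin D) (Fin D) ℂ) (hO : O.IsHermitian) :
    ∫ u, (((D : ℂ) + 1) * expval O u - O.trace) ∂ν = (O * ρ).trace :=
  shadow_estimator_unbiased_general D μ hsupp hinv ρ hρ ν hν O
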